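/- Let κ ∈ (0,1), c = κ²/(1+κ²)², and let u : ℝ → ℝ be the solution of u″ = u³ − u with u(0) = 0 and u′(0) = √(2c), which is periodic with period T = 4√(1+κ²)·K(κ). Then the time average of the kinetic energy satisfies (1/T)∫₀^T u′(t)² dt − c = −(1/(3(1+κ²))) · [ (2+κ²)/(1+κ²) − 2 E(κ)/K(κ) ]. -/

import Mathlib

/-!
The solution is `u(t) = a sn(t/σ, κ)` with `σ = √(1 + κ²)` and `a = √2 κ/σ`, written through the
Jacobi amplitude `am = F⁻¹`, `F(φ) = ∫₀^φ dθ/Δ(θ)`, `Δ(θ) = √(1 − κ² sin²θ)`. It solves the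
equation because `am' = Δ ∘ am`, and it is the only solution because `(u, v) ↦ (v, u³ − u)` is
locally Lipschitz. Since `F(2π) = 4K`, the substitution `φ = am(t/σ)` maps one period onto
`[0, 2π]` and turns `∫₀ᵀ u'²` into `(8κ²σ/(1 + κ²)²) ∫₀^{π/2} cos²φ Δ(φ) dφ`; integrating the
derivative of `κ² sin φ cos φ Δ(φ)` expresses this integral through `E` and `K`.
-/

/-- Complete elliptic integral of the first kind,
`K(κ) = ∫₀^{π/2} (1 − κ² sin²t)^{−1/2} dt`. -/
noncomputable def ellK (κ : ℝ) : ℝ :=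
  ∫ t in (0:ℝ)..(Real.pi/2), 1 / Real.sqrt (1 - κ^2 * Real.sin t ^ 2)

/-- Complete elliptic integral of the second kind,
`E(κ) = ∫₀^{π/2} (1 − κ² sin²t)^{1/2} dt`. -/
noncomputable def ellE (κ : ℝ) : ℝ :=
  ∫ t in (0:ℝ)..(Real.pi/2), Real.sqrt (1 - κ^2 * Real.sin t ^ 2)

open Real Set Filter intervalIntegral

noncomputable def ellipticDelta (κ φ : ℝ) : ℝ := √(1 - κ ^ 2 * sin φ ^ 2)

noncomputable def ellipticF (κ φ : ℝ) : ℝ := ∫ s in (0:ℝ)..φ, 1 / ellipticDelta κ s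

noncomputable def jacobiAm (κ : ℝ) : ℝ → ℝ := Function.invFun (ellipticF κ)

theorem integral_zero_two_pi_eq_four_mul {f : ℝ → ℝ} (hf : Continuous f)
    (h_refl : ∀ x, f (π - x) = f x) (h_per : ∀ x, f (x + π) = f x) :
    ∫ x in (0:ℝ)..2 * π, f x = 4 * ∫ x in (0:ℝ)..π / 2, f x := by
  have hi (a b : ℝ) : IntervalIntegrable f MeasureTheory.volume a b := hf.intervalIntegrable a b
  have h_half : ∫ x in (0:ℝ)..π, f x = 2 * ∫ x in (0:ℝ)..π / 2, f x := by
    have h := integral_comp_sub_left (a := 0) (b := π / 2) f π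
    simp only [h_refl, sub_zero, sub_half] at h
    rw [← integral_add_adjacent_intervals (hi 0 (π / 2)) (hi (π / 2) π), ← h]
    ring
  have h_shift : ∫ x in π..2 * π, f x = ∫ x in (0:ℝ)..π, f x := by
    have h := integral_comp_add_right (a := 0) (b := π) f π
    simp only [h_per, zero_add, ← two_mul] at h
    exact h.symm
  rw [← integral_add_adjacent_intervals (hi 0 π) (hi π (2 * π)), h_shift, h_half]
  ring

section EllipticIntegrals

variable {κ : ℝ}

lemma one_sub_sq_mul_sin_sq_pos (hκ : κ ^ 2 < 1) (φ : ℝ) : 0 < 1 - κ ^ 2 * sin φ ^ 2 := by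
  nlinarith [sin_sq_le_one φ, sq_nonneg κ]

lemma ellipticDelta_pos (hκ : κ ^ 2 < 1) (φ : ℝ) : 0 < ellipticDelta κ φ :=
  sqrt_pos.2 (one_sub_sq_mul_sin_sq_pos hκ φ)

lemma ellipticDelta_sq (hκ : κ ^ 2 < 1) (φ : ℝ) :
    ellipticDelta κ φ ^ 2 = 1 - κ ^ 2 * sin φ ^ 2 :=
  sq_sqrt (one_sub_sq_mul_sin_sq_pos hκ φ).le

lemma ellipticDelta_le_one (φ : ℝ) : ellipticDelta κ φ ≤ 1 :=
  sqrt_le_one.2 (by nlinarith [sq_nonneg (κ * sin φ)])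

lemma ellipticDelta_zero : ellipticDelta κ 0 = 1 := by simp [ellipticDelta]

lemma ellipticDelta_pi_sub (φ : ℝ) : ellipticDelta κ (π - φ) = ellipticDelta κ φ := by
  rw [ellipticDelta, sin_pi_sub, ellipticDelta]

lemma ellipticDelta_add_pi (φ : ℝ) : ellipticDelta κ (φ + π) = ellipticDelta κ φ := by
  rw [ellipticDelta, sin_add_pi, neg_sq, ellipticDelta]

lemma continuous_ellipticDelta : Continuous (ellipticDelta κ) := by
  unfold ellipticDelta; fun_prop

lemma continuous_one_div_ellipticDelta (hκ : κ ^ 2 < 1) :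
    Continuous fun φ ↦ 1 / ellipticDelta κ φ :=
  continuous_const.div continuous_ellipticDelta fun φ ↦ (ellipticDelta_pos hκ φ).ne'

lemma hasDerivAt_ellipticDelta (hκ : κ ^ 2 < 1) (φ : ℝ) :
    HasDerivAt (ellipticDelta κ) (-κ ^ 2 * sin φ * cos φ / ellipticDelta κ φ) φ := by
  have h := (((hasDerivAt_sin φ).fun_pow 2).const_mul (κ ^ 2)).const_sub 1
  convert h.sqrt (one_sub_sq_mul_sin_sq_pos hκ φ).ne' using 1
  · rfl
  · rw [ellipticDelta]
    field_simp
    ring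

lemma hasDerivAt_ellipticF (hκ : κ ^ 2 < 1) (φ : ℝ) :
    HasDerivAt (ellipticF κ) (1 / ellipticDelta κ φ) φ :=
  ((continuous_one_div_ellipticDelta hκ).integral_hasStrictDerivAt 0 φ).hasDerivAt

lemma ellipticF_zero : ellipticF κ 0 = 0 := integral_same

lemma strictMono_ellipticF (hκ : κ ^ 2 < 1) : StrictMono (ellipticF κ) :=
  strictMono_of_deriv_pos fun φ ↦ by
    rw [(hasDerivAt_ellipticF hκ φ).deriv]
    exact one_div_pos.2 (ellipticDelta_pos hκ φ)

lemma monotone_ellipticF_sub_id (hκ : κ ^ 2 < 1) : Monotone fun φ ↦ ellipticF κ φ - φ := by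
  have h φ := (hasDerivAt_ellipticF hκ φ).fun_sub (hasDerivAt_id' φ)
  refine monotone_of_deriv_nonneg (fun φ ↦ (h φ).differentiableAt) fun φ ↦ ?_
  rw [(h φ).deriv, sub_nonneg, le_div_iff₀ (ellipticDelta_pos hκ φ), one_mul]
  exact ellipticDelta_le_one φ

lemma surjective_ellipticF (hκ : κ ^ 2 < 1) : Function.Surjective (ellipticF κ) := by
  have hmono := monotone_ellipticF_sub_id (κ := κ) hκ
  have hge : ∀ φ, 0 ≤ φ → φ ≤ ellipticF κ φ := fun φ hφ ↦ by
    simpa [ellipticF_zero] using hmono hφ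
  have hle : ∀ φ, φ ≤ 0 → ellipticF κ φ ≤ φ := fun φ hφ ↦ by
    simpa [ellipticF_zero] using hmono hφ
  refine Continuous.surjective
    (continuous_iff_continuousAt.2 fun φ ↦ (hasDerivAt_ellipticF hκ φ).continuousAt) ?_ ?_
  · exact tendsto_atTop_mono' _ (eventually_atTop.2 ⟨0, hge⟩) tendsto_id
  · exact tendsto_atBot_mono' _ (eventually_atBot.2 ⟨0, hle⟩) tendsto_id

lemma ellipticF_jacobiAm (hκ : κ ^ 2 < 1) (x : ℝ) : ellipticF κ (jacobiAm κ x) = x :=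
  Function.rightInverse_invFun (surjective_ellipticF hκ) x

lemma jacobiAm_ellipticF (hκ : κ ^ 2 < 1) (φ : ℝ) : jacobiAm κ (ellipticF κ φ) = φ :=
  Function.leftInverse_invFun (strictMono_ellipticF hκ).injective φ

lemma jacobiAm_zero (hκ : κ ^ 2 < 1) : jacobiAm κ 0 = 0 := by
  simpa [ellipticF_zero] using jacobiAm_ellipticF hκ 0

lemma continuous_jacobiAm (hκ : κ ^ 2 < 1) : Continuous (jacobiAm κ) := by
  refine Monotone.continuous_of_surjective (fun x y hxy ↦ ?_)
    fun φ ↦ ⟨_, jacobiAm_ellipticF hκ φ⟩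
  rwa [← (strictMono_ellipticF hκ).le_iff_le, ellipticF_jacobiAm hκ, ellipticF_jacobiAm hκ]

lemma hasDerivAt_jacobiAm (hκ : κ ^ 2 < 1) (x : ℝ) :
    HasDerivAt (jacobiAm κ) (ellipticDelta κ (jacobiAm κ x)) x := by
  simpa using (hasDerivAt_ellipticF hκ (jacobiAm κ x)).of_local_left_inverse
    (continuous_jacobiAm hκ).continuousAt (one_div_ne_zero (ellipticDelta_pos hκ _).ne')
    (Eventually.of_forall (ellipticF_jacobiAm hκ))

lemma hasDerivAt_jacobiAm_div (hκ : κ ^ 2 < 1) (c t : ℝ) :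
    HasDerivAt (fun t ↦ jacobiAm κ (t / c)) (ellipticDelta κ (jacobiAm κ (t / c)) / c) t :=
  ((hasDerivAt_jacobiAm hκ (t / c)).comp t ((hasDerivAt_id' t).div_const c)).congr_deriv
    (mul_one_div _ _)

lemma ellK_eq_ellipticF : ellK κ = ellipticF κ (π / 2) := rfl

lemma ellE_eq_integral_ellipticDelta : ellE κ = ∫ φ in (0:ℝ)..π / 2, ellipticDelta κ φ := rfl

lemma ellipticF_two_pi (hκ : κ ^ 2 < 1) : ellipticF κ (2 * π) = 4 * ellK κ :=
  integral_zero_two_pi_eq_four_mul (continuous_one_div_ellipticDelta hκ)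
    (fun φ ↦ by rw [ellipticDelta_pi_sub]) (fun φ ↦ by rw [ellipticDelta_add_pi])

lemma ellK_pos (hκ : κ ^ 2 < 1) : 0 < ellK κ := by
  rw [ellK_eq_ellipticF, ← ellipticF_zero (κ := κ)]
  exact strictMono_ellipticF hκ (by positivity)

lemma integral_cos_sq_mul_ellipticDelta_two_pi :
    ∫ φ in (0:ℝ)..2 * π, cos φ ^ 2 * ellipticDelta κ φ
      = 4 * ∫ φ in (0:ℝ)..π / 2, cos φ ^ 2 * ellipticDelta κ φ :=
  integral_zero_two_pi_eq_four_mul ((continuous_cos.pow 2).mul continuous_ellipticDelta)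
    (fun φ ↦ by rw [ellipticDelta_pi_sub, cos_pi_sub, neg_sq])
    (fun φ ↦ by rw [ellipticDelta_add_pi, cos_add_pi, neg_sq])

lemma three_mul_integral_cos_sq_mul_ellipticDelta (hκ : κ ^ 2 < 1) :
    3 * κ ^ 2 * ∫ φ in (0:ℝ)..π / 2, cos φ ^ 2 * ellipticDelta κ φ
      = (1 + κ ^ 2) * ellE κ - (1 - κ ^ 2) * ellK κ := by
  have hderiv (φ : ℝ) : HasDerivAt (fun φ ↦ κ ^ 2 * (sin φ * cos φ * ellipticDelta κ φ))
      (3 * κ ^ 2 * (cos φ ^ 2 * ellipticDelta κ φ) - (1 + κ ^ 2) * ellipticDelta κ φ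
        + (1 - κ ^ 2) * (1 / ellipticDelta κ φ)) φ := by
    refine ((((hasDerivAt_sin φ).fun_mul (hasDerivAt_cos φ)).fun_mul
      (hasDerivAt_ellipticDelta hκ φ)).const_mul (κ ^ 2)).congr_deriv ?_
    have hΔ := ellipticDelta_pos hκ φ
    field_simp
    linear_combination (1 - κ ^ 2 + κ ^ 2 * sin φ ^ 2) * ellipticDelta_sq hκ φ
      - (2 * κ ^ 2 * ellipticDelta κ φ ^ 2 + κ ^ 4 * sin φ ^ 2) * cos_sq' φ
  have hJ : Continuous fun φ ↦ cos φ ^ 2 * ellipticDelta κ φ :=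
    (continuous_cos.pow 2).mul continuous_ellipticDelta
  have hi {g : ℝ → ℝ} (hg : Continuous g) (c : ℝ) :
      IntervalIntegrable (fun φ ↦ c * g φ) MeasureTheory.volume 0 (π / 2) :=
    (continuous_const.mul hg).intervalIntegrable _ _
  have h := integral_eq_sub_of_hasDerivAt (fun φ _ ↦ hderiv φ)
    (((hi hJ _).sub (hi continuous_ellipticDelta _)).add
      (hi (continuous_one_div_ellipticDelta hκ) _))
  rw [integral_add ((hi hJ _).sub (hi continuous_ellipticDelta _))
      (hi (continuous_one_div_ellipticDelta hκ) _),
    integral_sub (hi hJ _) (hi continuous_ellipticDelta _), integral_const_mul,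
    integral_const_mul, integral_const_mul] at h
  simp only [sin_zero, cos_pi_div_two, zero_mul, mul_zero, sub_zero] at h
  rw [ellE_eq_integral_ellipticDelta, ellK_eq_ellipticF, ellipticF]
  linarith

end EllipticIntegrals

theorem ODE_solution_unique_univ_of_locallyLipschitz {E : Type*} [NormedAddCommGroup E]
    [NormedSpace ℝ E] {F : E → E} (hF : LocallyLipschitz F) {f g : ℝ → E}
    (hf : ∀ t, HasDerivAt f (F (f t)) t) (hg : ∀ t, HasDerivAt g (F (g t)) t) {t₀ : ℝ}
    (h₀ : f t₀ = g t₀) : f = g := by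
  funext t
  obtain ⟨a, b, ht, ht₀⟩ : ∃ a b, t ∈ Ioo a b ∧ t₀ ∈ Ioo a b := by
    use min t t₀ - 1, max t t₀ + 1
    grind
  have hfc : Continuous f := continuous_iff_continuousAt.2 fun t ↦ (hf t).continuousAt
  have hgc : Continuous g := continuous_iff_continuousAt.2 fun t ↦ (hg t).continuousAt
  -- on a bounded time interval both trajectories stay in a compact set, where `F` is Lipschitz
  obtain ⟨K, hK⟩ := hF.locallyLipschitzOn.exists_lipschitzOnWith_of_compact
    ((isCompact_Icc.image hfc).union (isCompact_Icc.image hgc))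
  exact ODE_solution_unique_of_mem_Ioo (v := fun _ ↦ F) (fun _ _ ↦ hK) ht₀
    (fun τ hτ ↦ ⟨hf τ, .inl (mem_image_of_mem f (Ioo_subset_Icc_self hτ))⟩)
    (fun τ hτ ↦ ⟨hg τ, .inr (mem_image_of_mem g (Ioo_subset_Icc_self hτ))⟩) h₀ ht

def cubicField (p : ℝ × ℝ) : ℝ × ℝ := (p.2, p.1 ^ 3 - p.1)

lemma locallyLipschitz_cubicField : LocallyLipschitz cubicField :=
  (show ContDiff ℝ 1 cubicField by unfold cubicField; fun_prop).locallyLipschitz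

/-- `(a sn(t/σ), (a/σ) cn(t/σ) dn(t/σ))` with modulus `κ`, `σ = √(1 + κ²)` and `a = √2 κ/σ`. -/
noncomputable def ellipticOrbit (κ t : ℝ) : ℝ × ℝ :=
  (√2 * κ / √(1 + κ ^ 2) * sin (jacobiAm κ (t / √(1 + κ ^ 2))),
    √2 * κ / (1 + κ ^ 2) *
      (cos (jacobiAm κ (t / √(1 + κ ^ 2))) * ellipticDelta κ (jacobiAm κ (t / √(1 + κ ^ 2)))))

section EllipticOrbit

variable {κ : ℝ}

lemma hasDerivAt_ellipticOrbit (hκ : κ ^ 2 < 1) (t : ℝ) :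
    HasDerivAt (ellipticOrbit κ) (cubicField (ellipticOrbit κ t)) t := by
  have hφ := hasDerivAt_jacobiAm_div hκ √(1 + κ ^ 2) t
  have hsn := ((hasDerivAt_sin _).comp t hφ).const_mul (√2 * κ / √(1 + κ ^ 2))
  have hcndn := (((hasDerivAt_cos _).comp t hφ).fun_mul
    ((hasDerivAt_ellipticDelta hκ _).comp t hφ)).const_mul (√2 * κ / (1 + κ ^ 2))
  refine (hsn.prodMk hcndn).congr_deriv ?_
  simp only [cubicField, ellipticOrbit, Function.comp_apply]
  generalize jacobiAm κ (t / √(1 + κ ^ 2)) = φ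
  have hσ : √(1 + κ ^ 2) ^ 2 = 1 + κ ^ 2 := sq_sqrt (by positivity)
  have hσ0 : 0 < √(1 + κ ^ 2) := sqrt_pos.2 (by positivity)
  have hΔ := ellipticDelta_pos hκ φ
  ext
  · field_simp
    rw [hσ]
  · field_simp
    rw [hσ, sq_sqrt zero_le_two]
    linear_combination -κ * (1 + κ ^ 2) * sin φ * ellipticDelta_sq hκ φ
      - κ ^ 3 * (1 + κ ^ 2) * sin φ * cos_sq' φ

lemma ellipticOrbit_zero (hκ : κ ^ 2 < 1) : ellipticOrbit κ 0 = (0, √2 * κ / (1 + κ ^ 2)) := by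
  simp [ellipticOrbit, jacobiAm_zero hκ, ellipticDelta_zero]

lemma integral_sq_ellipticOrbit_snd (hκ : κ ^ 2 < 1) :
    ∫ t in (0:ℝ)..4 * √(1 + κ ^ 2) * ellK κ, (ellipticOrbit κ t).2 ^ 2
      = 8 * κ ^ 2 * √(1 + κ ^ 2) / (1 + κ ^ 2) ^ 2
        * ∫ φ in (0:ℝ)..π / 2, cos φ ^ 2 * ellipticDelta κ φ := by
  set σ := √(1 + κ ^ 2) with hσ_def
  have hσ0 : 0 < σ := sqrt_pos.2 (by positivity)
  have hφ' : Continuous fun t ↦ ellipticDelta κ (jacobiAm κ (t / σ)) / σ := by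
    have := continuous_jacobiAm hκ
    have := continuous_ellipticDelta (κ := κ)
    fun_prop
  -- substitute `φ = am(t/σ)`, `dt = σ dφ / Δ(φ)`
  have hsubst := integral_comp_mul_deriv (a := 0) (b := 4 * σ * ellK κ)
    (g := fun φ ↦ cos φ ^ 2 * ellipticDelta κ φ)
    (fun t _ ↦ hasDerivAt_jacobiAm_div hκ σ t) hφ'.continuousOn
    ((continuous_cos.pow 2).mul continuous_ellipticDelta)
  have hend : jacobiAm κ (4 * σ * ellK κ / σ) = 2 * π := by
    rw [mul_comm 4 σ, mul_assoc, mul_div_cancel_left₀ _ hσ0.ne', ← ellipticF_two_pi hκ,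
      jacobiAm_ellipticF hκ]
  rw [zero_div, jacobiAm_zero hκ, hend, integral_cos_sq_mul_ellipticDelta_two_pi] at hsubst
  rw [show ∀ J : ℝ, 8 * κ ^ 2 * σ / (1 + κ ^ 2) ^ 2 * J
      = 2 * κ ^ 2 * σ / (1 + κ ^ 2) ^ 2 * (4 * J) from fun J ↦ by ring,
    ← hsubst, ← integral_const_mul]
  refine integral_congr fun t _ ↦ ?_
  simp only [ellipticOrbit, Function.comp_apply, ← hσ_def]
  field_simp
  rw [sq_sqrt zero_le_two]
  ring

end EllipticOrbit

/-- for `κ ∈ (0,1)`, `c = κ²/(1+κ²)²`, and `u` the solution of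
`u″ = u³ − u`, `u(0) = 0`, `u′(0) = √(2c)` (periodic of period `T = 4√(1+κ²)K(κ)`), the
time average of the kinetic energy satisfies
`(1/T)∫₀ᵀ u′(t)² dt − c = −(1/(3(1+κ²)))[(2+κ²)/(1+κ²) − 2E(κ)/K(κ)]`. -/
theorem statement13 (κ : ℝ) (hκ0 : 0 < κ) (hκ1 : κ < 1) (u v : ℝ → ℝ)
    (hu : ∀ t, HasDerivAt u (v t) t)
    (hv : ∀ t, HasDerivAt v (u t ^ 3 - u t) t)
    (hu0 : u 0 = 0)
    (hv0 : v 0 = Real.sqrt (2 * (κ^2 / (1 + κ^2)^2))) :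
    (1 / (4 * Real.sqrt (1 + κ^2) * ellK κ)) *
        (∫ t in (0:ℝ)..(4 * Real.sqrt (1 + κ^2) * ellK κ), (v t)^2)
      - κ^2 / (1 + κ^2)^2
      = -(1 / (3 * (1 + κ^2))) * ((2 + κ^2) / (1 + κ^2) - 2 * ellE κ / ellK κ) := by
  have hκ : κ ^ 2 < 1 := by nlinarith
  have hv0' : v 0 = √2 * κ / (1 + κ ^ 2) := by
    rw [hv0, ← sqrt_sq (by positivity : 0 ≤ √2 * κ / (1 + κ ^ 2)), div_pow, mul_pow,
      sq_sqrt zero_le_two, mul_div_assoc]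
  have hsol : (fun t ↦ (u t, v t)) = ellipticOrbit κ :=
    ODE_solution_unique_univ_of_locallyLipschitz locallyLipschitz_cubicField
      (fun t ↦ (hu t).prodMk (hv t)) (hasDerivAt_ellipticOrbit hκ) (t₀ := 0)
      (by rw [ellipticOrbit_zero hκ, hu0, hv0'])
  have hv_eq (t : ℝ) : v t = (ellipticOrbit κ t).2 := by rw [← hsol]
  simp_rw [hv_eq]
  rw [integral_sq_ellipticOrbit_snd hκ]
  have hJ := three_mul_integral_cos_sq_mul_ellipticDelta hκ
  have hK := ellK_pos hκ
  field_simp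
  linear_combination 8 * hJ
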